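/- Let H be a group with trivial center and admitting no surjective group homomorphism onto ℤ, and let φ be an automorphism of H. Let Out⁰(H_φ) denote the subgroup of Out(H_φ) consisting of elements admitting a representative ψ ∈ Aut(H_φ) with ψ(ι(H)) = ι(H) and ψ(t) ∈ ι(H)·t. Then Out⁰(H_φ) is isomorphic to the quotient C_{Out(H)}([φ]) / ⟨[φ]⟩ of the centralizer of [φ] in Out(H) by the cyclic subgroup generated by [φ] (which is normal in the centralizer, being central in it). Moreover, either Out⁰(H_φ) = Out(H_φ), or [φ] is conjugate to [φ]⁻¹ in Out(H) and Out⁰(H_φ) has index two in Out(H_φ). -/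

import Mathlib

/-- The mapping torus `H ⋊_φ ℤ` of an automorphism `φ` of `H`: the semidirect
product in which the generator `t` of the `ℤ`-factor acts by
`t · ι(h) · t⁻¹ = ι(φ(h))`. -/
abbrev MappingTorus (H : Type*) [Group H] (φ : MulAut H) : Type _ :=
  H ⋊[zpowersHom (MulAut H) φ] Multiplicative ℤ

/-- The canonical inclusion `ι : H → H ⋊_φ ℤ`. -/
abbrev MappingTorus.ι {H : Type*} [Group H] (φ : MulAut H) : H →* MappingTorus H φ :=
  SemidirectProduct.inl

/-- The canonical generator `t` of the `ℤ`-factor of `H ⋊_φ ℤ`. -/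
abbrev MappingTorus.t {H : Type*} [Group H] (φ : MulAut H) : MappingTorus H φ :=
  SemidirectProduct.inr (Multiplicative.ofAdd 1)

instance innRangeNormal (G : Type*) [Group G] :
    ((MulAut.conj : G →* MulAut G).range).Normal := by
  constructor
  rintro _ ⟨x, rfl⟩ g
  refine ⟨g x, ?_⟩
  ext h
  simp [MulAut.conj_apply, MulAut.mul_apply, map_mul, map_inv, mul_assoc]

/-- The outer automorphism group: automorphisms modulo inner automorphisms. -/
abbrev Out (G : Type*) [Group G] :=
  MulAut G ⧸ (MulAut.conj : G →* MulAut G).range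

instance zpowersSubgroupOfCentralizerNormal (G : Type*) [Group G] (x : G) :
    ((Subgroup.zpowers x).subgroupOf (Subgroup.centralizer {x})).Normal := by
  constructor
  intro n hn g
  rw [Subgroup.mem_subgroupOf] at hn ⊢
  obtain ⟨k, hk⟩ := hn
  refine ⟨k, ?_⟩
  have hg : Commute x (g : G) := by
    have hmem := g.2
    rw [Subgroup.mem_centralizer_iff] at hmem
    exact hmem x (Set.mem_singleton x)
  have hc : Commute (x ^ k) (g : G) := hg.zpow_left k
  have hcoe : ((g * n * g⁻¹ : Subgroup.centralizer ({x} : Set G)) : G)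
      = (g : G) * (n : G) * (g : G)⁻¹ := rfl
  rw [hcoe, ← hk, ← hc.eq, mul_inv_cancel_right]


/-!
A group with no surjection onto `ℤ` has no nontrivial homomorphism to `ℤ` at all, so every
automorphism `ψ` of `H ⋊_φ ℤ` preserves `ι(H)`, restricts to an automorphism of `H`, and sends `t`
to `ι(g) t^{±1}`. The sign is a homomorphism `Out(H ⋊_φ ℤ) → ℤˣ` with kernel `Out⁰`, so `Out⁰` is
everything or has index two. Applying `ψ` to `t ι(h) t⁻¹ = ι(φ h)` gives
`[ψ|_H] [φ] = [φ]^{±1} [ψ|_H]` in `Out(H)`: a sign `-1` automorphism conjugates `[φ]` to `[φ]⁻¹`,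
and sign `+1` automorphisms restrict into the centralizer of `[φ]`. Conversely, if
`α φ = conj(g) φ α` then `ι(h) ↦ ι(α h)`, `t ↦ ι(g) t` is an automorphism of sign `+1`. Since `H`
is centerless, an automorphism is determined by its restriction and its sign, so a sign `+1`
automorphism is inner exactly when its restriction lies in `⟨[φ]⟩` modulo inner automorphisms.
-/

theorem MonoidHom.exists_surjective_of_ne_one {H : Type*} [Group H] {f : H →* Multiplicative ℤ}
    (hf : f ≠ 1) : ∃ g : H →* Multiplicative ℤ, Function.Surjective g := by
  have : Infinite f.range := by
    refine not_finite_iff_infinite.1 fun _ => hf (MonoidHom.ext fun x => ?_)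
    exact congrArg Subtype.val (isOfFinOrder_of_finite (f.rangeRestrict x)).eq_one'
  exact ⟨(intCyclicMulEquiv (G := f.range)).symm.toMonoidHom.comp f.rangeRestrict,
    intCyclicMulEquiv.symm.surjective.comp f.rangeRestrict_surjective⟩

theorem MonoidHom.eq_one_of_forall_not_surjective {H : Type*} [Group H]
    (hH : ∀ f : H →* Multiplicative ℤ, ¬ Function.Surjective f) (f : H →* Multiplicative ℤ) :
    f = 1 := by
  by_contra hf
  obtain ⟨g, hg⟩ := exists_surjective_of_ne_one hf
  exact hH g hg

theorem MulAut.conj_injective_of_center_eq_bot {G : Type*} [Group G]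
    (hG : Subgroup.center G = ⊥) : Function.Injective (MulAut.conj : G → MulAut G) := by
  refine (injective_iff_map_eq_one MulAut.conj).2 fun x hx => ?_
  have hcenter : x ∈ Subgroup.center G := Subgroup.mem_center_iff.2 fun g =>
    (by simpa [mul_inv_eq_iff_eq_mul] using DFunLike.congr_fun hx g : x * g = g * x).symm
  simpa [hG] using hcenter

theorem MulAut.inv_mul_eq_conj_mul_mul_inv {G : Type*} [Group G] {α φ : MulAut G} {g : G}
    (hαg : α * φ = MulAut.conj g * φ * α) :
    α⁻¹ * φ = MulAut.conj (α⁻¹ g)⁻¹ * φ * α⁻¹ := by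
  ext h
  apply α.injective
  have := DFunLike.congr_fun hαg (α⁻¹ h)
  simp only [MulAut.mul_apply, MulAut.conj_apply, map_inv, MulAut.conj_inv_apply, map_mul,
    MulAut.apply_inv_self] at this ⊢
  rw [this]
  group

theorem Out.mk_conj {G : Type*} [Group G] (x : G) : ((MulAut.conj x : MulAut G) : Out G) = 1 :=
  (QuotientGroup.eq_one_iff _).2 ⟨x, rfl⟩

namespace SemidirectProduct

variable {N G : Type*} [Group N] [Group G] {φ : G →* MulAut N}

theorem mul_inl_mul_inv (x : N ⋊[φ] G) (n : N) :
    x * inl n * x⁻¹ = inl (MulAut.conj x.left (φ x.right n)) := by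
  ext <;> simp [mul_assoc]

variable (hN : ∀ f : N →* G, f = 1)
include hN

theorem right_apply_inl (ψ : MulAut (N ⋊[φ] G)) (n : N) : (ψ (inl n)).right = 1 :=
  DFunLike.congr_fun (hN (rightHom.comp (ψ.toMonoidHom.comp inl))) n

theorem inl_left_apply_inl (ψ : MulAut (N ⋊[φ] G)) (n : N) :
    inl (ψ (inl n)).left = ψ (inl n) := by
  rw [← inl_left_mul_inr_right (ψ (inl n)), right_apply_inl hN, map_one, mul_one, left_inl]

def autRestrict : MulAut (N ⋊[φ] G) →* MulAut N where
  toFun ψ :=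
    { toFun n := (ψ (inl n)).left
      invFun n := (ψ⁻¹ (inl n)).left
      left_inv n := inl_injective (φ := φ) (by simp [inl_left_apply_inl hN])
      right_inv n := inl_injective (φ := φ) (by simp [inl_left_apply_inl hN])
      map_mul' a b := by simp [right_apply_inl hN] }
  map_one' := rfl
  map_mul' ψ₁ ψ₂ := by
    ext n
    apply inl_injective (φ := φ)
    simp [inl_left_apply_inl hN]

theorem inl_autRestrict (ψ : MulAut (N ⋊[φ] G)) (n : N) :
    inl (autRestrict hN ψ n) = ψ (inl n) :=
  inl_left_apply_inl hN ψ n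

theorem autRestrict_mul_eq (ψ : MulAut (N ⋊[φ] G)) (g : G) :
    autRestrict hN ψ * φ g =
      MulAut.conj (ψ (inr g)).left * φ (ψ (inr g)).right * autRestrict hN ψ := by
  ext n
  apply inl_injective (φ := φ)
  rw [MulAut.mul_apply, inl_autRestrict, inl_aut, map_inv inr, map_mul, map_mul, map_inv,
    ← inl_autRestrict hN, mul_inl_mul_inv]
  rfl

theorem autRestrict_conj (x : N ⋊[φ] G) :
    autRestrict hN (MulAut.conj x) = MulAut.conj x.left * φ x.right := by
  ext n
  apply inl_injective (φ := φ)
  rw [inl_autRestrict, MulAut.conj_apply, mul_inl_mul_inv]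
  rfl

theorem map_range_inl (ψ : MulAut (N ⋊[φ] G)) :
    Subgroup.map ψ.toMonoidHom inl.range = (inl : N →* N ⋊[φ] G).range := by
  have hcomp : ψ.toMonoidHom.comp inl = inl.comp (autRestrict hN ψ).toMonoidHom :=
    MonoidHom.ext fun n => (inl_autRestrict hN ψ n).symm
  rw [MonoidHom.map_range, hcomp, MonoidHom.range_comp,
    MonoidHom.range_eq_top_of_surjective _ (autRestrict hN ψ).surjective, ← MonoidHom.range_eq_map]

end SemidirectProduct

namespace MappingTorus

open SemidirectProduct Multiplicative

variable {H : Type*} [Group H] {φ : MulAut H}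

theorem inr_eq_t_zpow (z : Multiplicative ℤ) : (inr z : MappingTorus H φ) = t φ ^ toAdd z := by
  rw [← map_zpow, ← ofAdd_zsmul, smul_eq_mul, mul_one, ofAdd_toAdd]

theorem ι_left_mul_t_zpow (x : MappingTorus H φ) : ι φ x.left * t φ ^ toAdd x.right = x := by
  rw [← inr_eq_t_zpow, inl_left_mul_inr_right]

theorem hom_ext {K : Type*} [Group K] {f₁ f₂ : MappingTorus H φ →* K}
    (hι : ∀ h, f₁ (ι φ h) = f₂ (ι φ h)) (ht : f₁ (t φ) = f₂ (t φ)) : f₁ = f₂ :=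
  SemidirectProduct.hom_ext (MonoidHom.ext hι) (MonoidHom.ext_mint ht)

theorem zpow_mul_mul_zpow_inv {K : Type*} [Group K] (β : H →* K) {u : K}
    (hu : ∀ h, u * β h * u⁻¹ = β (φ h)) (n : ℤ) (h : H) :
    u ^ n * β h * (u ^ n)⁻¹ = β ((φ ^ n) h) := by
  have hu' : ∀ h, u⁻¹ * β h * u = β (φ⁻¹ h) := fun h => by
    have := hu (φ⁻¹ h)
    rw [MulAut.apply_inv_self] at this
    rw [← this]
    group
  induction n using Int.induction_on generalizing h with
  | zero => simp
  | succ n ih => rw [zpow_add_one, zpow_add_one, MulAut.mul_apply, ← ih, ← hu]; group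
  | pred n ih => rw [zpow_sub_one, zpow_sub_one, MulAut.mul_apply, ← ih, ← hu']; group

def lift {K : Type*} [Group K] (β : H →* K) (u : K) (hu : ∀ h, u * β h * u⁻¹ = β (φ h)) :
    MappingTorus H φ →* K :=
  SemidirectProduct.lift β (zpowersHom K u) fun z => MonoidHom.ext fun h =>
    (zpow_mul_mul_zpow_inv β hu (toAdd z) h).symm

@[simp]
theorem lift_ι {K : Type*} [Group K] (β : H →* K) (u : K) (hu : ∀ h, u * β h * u⁻¹ = β (φ h))
    (h : H) : lift β u hu (ι φ h) = β h :=
  lift_inl _ _ _ h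

@[simp]
theorem lift_t {K : Type*} [Group K] (β : H →* K) (u : K) (hu : ∀ h, u * β h * u⁻¹ = β (φ h)) :
    lift β u hu (t φ) = u := by
  simp [lift]

theorem ι_mul_t_mul_ι_mul_inv {α : MulAut H} {g : H} (hαg : α * φ = MulAut.conj g * φ * α)
    (h : H) : (ι φ g * t φ) * ι φ (α h) * (ι φ g * t φ)⁻¹ = ι φ (α (φ h)) := by
  rw [mul_inl_mul_inv]
  congr 1
  simpa using DFunLike.congr_fun hαg.symm h

def twistAut (α : MulAut H) (g : H) (hαg : α * φ = MulAut.conj g * φ * α) :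
    MulAut (MappingTorus H φ) :=
  MonoidHom.toMulEquiv
    (lift ((ι φ).comp α.toMonoidHom) (ι φ g * t φ) (ι_mul_t_mul_ι_mul_inv hαg))
    (lift ((ι φ).comp α⁻¹.toMonoidHom) (ι φ (α⁻¹ g)⁻¹ * t φ)
      (ι_mul_t_mul_ι_mul_inv (MulAut.inv_mul_eq_conj_mul_mul_inv hαg)))
    (hom_ext (fun h => by simp) (by simp))
    (hom_ext (fun h => by simp) (by simp))

@[simp]
theorem twistAut_ι (α : MulAut H) (g : H) (hαg : α * φ = MulAut.conj g * φ * α) (h : H) :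
    twistAut α g hαg (ι φ h) = ι φ (α h) := by
  simp [twistAut]

@[simp]
theorem twistAut_t (α : MulAut H) (g : H) (hαg : α * φ = MulAut.conj g * φ * α) :
    twistAut α g hαg (t φ) = ι φ g * t φ := by
  simp [twistAut]

def degree (ψ : MulAut (MappingTorus H φ)) : ℤ := toAdd (ψ (t φ)).right

theorem apply_t (ψ : MulAut (MappingTorus H φ)) :
    ψ (t φ) = ι φ (ψ (t φ)).left * t φ ^ degree ψ :=
  (ι_left_mul_t_zpow _).symm

theorem degree_eq_one_iff (ψ : MulAut (MappingTorus H φ)) :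
    degree ψ = 1 ↔ ∃ g : H, ψ (t φ) = ι φ g * t φ := by
  constructor
  · intro hψ
    exact ⟨(ψ (t φ)).left, (apply_t ψ).trans (by rw [hψ, zpow_one])⟩
  · rintro ⟨g, hg⟩
    simp [degree, hg]

theorem degree_conj (x : MappingTorus H φ) : degree (MulAut.conj x) = 1 := by
  simp [degree, mul_inv_cancel_comm]

theorem degree_twistAut (α : MulAut H) (g : H) (hαg : α * φ = MulAut.conj g * φ * α) :
    degree (twistAut α g hαg) = 1 :=
  (degree_eq_one_iff _).2 ⟨g, twistAut_t α g hαg⟩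

variable (hN : ∀ f : H →* Multiplicative ℤ, f = 1)
include hN

theorem right_apply (ψ : MulAut (MappingTorus H φ)) (x : MappingTorus H φ) :
    (ψ x).right = (ψ (t φ)).right ^ toAdd x.right := by
  have key : rightHom.comp ψ.toMonoidHom = (zpowersHom _ (ψ (t φ)).right).comp rightHom :=
    hom_ext (fun h => by simp [right_apply_inl hN]) (by simp)
  simpa using DFunLike.congr_fun key x

theorem degree_mul (ψ₁ ψ₂ : MulAut (MappingTorus H φ)) :
    degree (ψ₁ * ψ₂) = degree ψ₁ * degree ψ₂ := by
  rw [degree, MulAut.mul_apply, right_apply hN, toAdd_zpow, smul_eq_mul, mul_comm]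
  rfl

variable (φ) in
def degreeHom : MulAut (MappingTorus H φ) →* ℤˣ :=
  MonoidHom.toHomUnits
    { toFun := degree
      map_one' := rfl
      map_mul' := degree_mul hN }

@[simp]
theorem coe_degreeHom (ψ : MulAut (MappingTorus H φ)) : (degreeHom φ hN ψ : ℤ) = degree ψ := rfl

theorem mem_ker_degreeHom_iff (ψ : MulAut (MappingTorus H φ)) :
    ψ ∈ (degreeHom φ hN).ker ↔ degree ψ = 1 := by
  rw [MonoidHom.mem_ker, Units.ext_iff, coe_degreeHom, Units.val_one]

variable (φ) in
def outDegree : Out (MappingTorus H φ) →* ℤˣ :=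
  QuotientGroup.lift _ (degreeHom φ hN) <| by
    rintro _ ⟨x, rfl⟩
    exact Units.ext (degree_conj x)

@[simp]
theorem outDegree_mk (ψ : MulAut (MappingTorus H φ)) :
    outDegree φ hN (ψ : Out (MappingTorus H φ)) = degreeHom φ hN ψ := rfl

theorem autRestrict_mul_self (ψ : MulAut (MappingTorus H φ)) :
    autRestrict hN ψ * φ = MulAut.conj (ψ (t φ)).left * φ ^ degree ψ * autRestrict hN ψ := by
  have h := autRestrict_mul_eq hN ψ (ofAdd 1)
  rwa [zpowersHom_apply, toAdd_ofAdd, zpow_one] at h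

theorem mk_autRestrict_mul_mk (ψ : MulAut (MappingTorus H φ)) :
    (autRestrict hN ψ : Out H) * φ = (φ : Out H) ^ degree ψ * autRestrict hN ψ := by
  rw [← QuotientGroup.mk_mul, autRestrict_mul_self hN, QuotientGroup.mk_mul, QuotientGroup.mk_mul,
    Out.mk_conj, one_mul, QuotientGroup.mk_zpow]

theorem mk_autRestrict_conj (x : MappingTorus H φ) :
    (autRestrict hN (MulAut.conj x) : Out H) = (φ : Out H) ^ toAdd x.right := by
  rw [autRestrict_conj, QuotientGroup.mk_mul, Out.mk_conj, one_mul, zpowersHom_apply,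
    QuotientGroup.mk_zpow]

theorem autRestrict_twistAut (α : MulAut H) (g : H) (hαg : α * φ = MulAut.conj g * φ * α) :
    autRestrict hN (twistAut α g hαg) = α := by
  ext h
  apply inl_injective (φ := zpowersHom (MulAut H) φ)
  rw [inl_autRestrict, twistAut_ι]

theorem eq_of_autRestrict_eq (hZ : Subgroup.center H = ⊥) {ψ₁ ψ₂ : MulAut (MappingTorus H φ)}
    (hres : autRestrict hN ψ₁ = autRestrict hN ψ₂) (hdeg : degree ψ₁ = degree ψ₂) : ψ₁ = ψ₂ := by
  have hconj : MulAut.conj (ψ₁ (t φ)).left = MulAut.conj (ψ₂ (t φ)).left := by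
    have h := autRestrict_mul_self hN ψ₁
    rw [hres, hdeg, autRestrict_mul_self hN ψ₂, mul_left_inj, mul_left_inj] at h
    exact h.symm
  have ht : ψ₁ (t φ) = ψ₂ (t φ) := by
    rw [apply_t ψ₁, apply_t ψ₂, MulAut.conj_injective_of_center_eq_bot hZ hconj, hdeg]
  refine MulEquiv.toMonoidHom_injective (hom_ext (fun h => ?_) ht)
  simp only [MulEquiv.coe_toMonoidHom, ← inl_autRestrict hN, hres]

theorem mem_range_conj_iff (hZ : Subgroup.center H = ⊥) {ψ : MulAut (MappingTorus H φ)}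
    (hψ : degree ψ = 1) :
    ψ ∈ (MulAut.conj : MappingTorus H φ →* _).range ↔
      (autRestrict hN ψ : Out H) ∈ Subgroup.zpowers (φ : Out H) := by
  constructor
  · rintro ⟨x, rfl⟩
    exact ⟨toAdd x.right, (mk_autRestrict_conj hN x).symm⟩
  · rintro ⟨n, hn⟩
    obtain ⟨h₀, hh₀⟩ : autRestrict hN ψ / φ ^ n ∈ (MulAut.conj : H →* _).range := by
      rw [← QuotientGroup.eq_iff_div_mem, QuotientGroup.mk_zpow, ← hn]
    refine ⟨ι φ h₀ * inr (ofAdd n), eq_of_autRestrict_eq hN hZ ?_ (by rw [degree_conj, hψ])⟩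
    rw [autRestrict_conj]
    simp [hh₀]

theorem mem_ker_outDegree_iff (x : Out (MappingTorus H φ)) :
    x ∈ (outDegree φ hN).ker ↔ ∃ ψ : MulAut (MappingTorus H φ),
      (ψ : Out (MappingTorus H φ)) = x ∧ Subgroup.map ψ.toMonoidHom (ι φ).range = (ι φ).range ∧
      ∃ g : H, ψ (t φ) = ι φ g * t φ := by
  constructor
  · intro hx
    obtain ⟨ψ, rfl⟩ := QuotientGroup.mk_surjective x
    rw [MonoidHom.mem_ker, outDegree_mk, ← MonoidHom.mem_ker, mem_ker_degreeHom_iff,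
      degree_eq_one_iff] at hx
    exact ⟨ψ, rfl, map_range_inl hN ψ, hx⟩
  · rintro ⟨ψ, rfl, -, hψ⟩
    rw [MonoidHom.mem_ker, outDegree_mk, ← MonoidHom.mem_ker, mem_ker_degreeHom_iff,
      degree_eq_one_iff]
    exact hψ

variable (φ) in
def kerDegreeHomToKerOutDegree : (degreeHom φ hN).ker →* (outDegree φ hN).ker :=
  ((QuotientGroup.mk' _).comp (degreeHom φ hN).ker.subtype).codRestrict _ fun ψ => ψ.2

theorem kerDegreeHomToKerOutDegree_surjective :
    Function.Surjective (kerDegreeHomToKerOutDegree φ hN) := by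
  rintro ⟨x, hx⟩
  obtain ⟨ψ, rfl⟩ := QuotientGroup.mk_surjective x
  exact ⟨⟨ψ, hx⟩, rfl⟩

variable (φ) in
def kerDegreeHomToCentralizer :
    (degreeHom φ hN).ker →* Subgroup.centralizer {(φ : Out H)} :=
  ((QuotientGroup.mk' _).comp ((autRestrict hN).comp (degreeHom φ hN).ker.subtype)).codRestrict _
    fun ψ => by
      rw [Subgroup.mem_centralizer_singleton_iff]
      simpa [(mem_ker_degreeHom_iff hN ψ.1).1 ψ.2] using mk_autRestrict_mul_mk hN ψ.1

theorem kerDegreeHomToCentralizer_surjective :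
    Function.Surjective (kerDegreeHomToCentralizer φ hN) := by
  rintro ⟨x, hx⟩
  obtain ⟨α, rfl⟩ := QuotientGroup.mk_surjective x
  obtain ⟨g, hg⟩ : α * φ / (φ * α) ∈ (MulAut.conj : H →* _).range := by
    rw [← QuotientGroup.eq_iff_div_mem, QuotientGroup.mk_mul, QuotientGroup.mk_mul]
    exact Subgroup.mem_centralizer_singleton_iff.1 hx
  have hαg : α * φ = MulAut.conj g * φ * α := by rw [hg, mul_assoc, div_mul_cancel]
  refine ⟨⟨twistAut α g hαg, (mem_ker_degreeHom_iff hN _).2 (degree_twistAut α g hαg)⟩, ?_⟩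
  exact Subtype.ext (congrArg QuotientGroup.mk (autRestrict_twistAut hN α g hαg))

variable (φ) in
def kerDegreeHomToCentralizerQuotient :
    (degreeHom φ hN).ker →* Subgroup.centralizer {(φ : Out H)} ⧸
      (Subgroup.zpowers (φ : Out H)).subgroupOf (Subgroup.centralizer {(φ : Out H)}) :=
  (QuotientGroup.mk' _).comp (kerDegreeHomToCentralizer φ hN)

theorem ker_kerDegreeHomToKerOutDegree (hZ : Subgroup.center H = ⊥) :
    (kerDegreeHomToKerOutDegree φ hN).ker = (kerDegreeHomToCentralizerQuotient φ hN).ker := by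
  ext ψ
  rw [MonoidHom.mem_ker, MonoidHom.mem_ker, kerDegreeHomToCentralizerQuotient,
    MonoidHom.comp_apply, QuotientGroup.mk'_apply,
    QuotientGroup.eq_one_iff, Subgroup.mem_subgroupOf, ← Subtype.val_inj, OneMemClass.coe_one]
  exact (QuotientGroup.eq_one_iff _).trans
    (mem_range_conj_iff hN hZ ((mem_ker_degreeHom_iff hN ψ.1).1 ψ.2))

variable (φ) in
noncomputable def kerOutDegreeEquiv (hZ : Subgroup.center H = ⊥) :
    (outDegree φ hN).ker ≃*
      Subgroup.centralizer {(φ : Out H)} ⧸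
        (Subgroup.zpowers (φ : Out H)).subgroupOf (Subgroup.centralizer {(φ : Out H)}) :=
  (QuotientGroup.quotientKerEquivOfSurjective _
      (kerDegreeHomToKerOutDegree_surjective hN)).symm.trans <|
    (QuotientGroup.quotientMulEquivOfEq (ker_kerDegreeHomToKerOutDegree hN hZ)).trans <|
      QuotientGroup.quotientKerEquivOfSurjective (kerDegreeHomToCentralizerQuotient φ hN)
        ((QuotientGroup.mk'_surjective _).comp (kerDegreeHomToCentralizer_surjective hN))

theorem ker_outDegree_eq_top_or :
    (outDegree φ hN).ker = ⊤ ∨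
      (IsConj (φ : Out H) (φ : Out H)⁻¹ ∧ (outDegree φ hN).ker.index = 2) := by
  have hcard : Nat.card ℤˣ = 2 := by rw [Nat.card_eq_fintype_card, Fintype.card_units_int]
  have : Fact (Nat.card ℤˣ).Prime := ⟨hcard ▸ Nat.prime_two⟩
  rcases (outDegree φ hN).range.eq_bot_or_eq_top_of_prime_card with hbot | htop
  · left
    rw [MonoidHom.range_eq_bot_iff] at hbot
    rw [hbot, MonoidHom.ker_one]
  · right
    obtain ⟨x, hx⟩ := MonoidHom.range_eq_top.1 htop (-1)
    obtain ⟨ψ, rfl⟩ := QuotientGroup.mk_surjective x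
    have hdeg : degree ψ = -1 := by simpa using congrArg Units.val hx
    refine ⟨isConj_iff.2 ⟨autRestrict hN ψ, ?_⟩, ?_⟩
    · rw [mk_autRestrict_mul_mk, hdeg, zpow_neg_one, mul_inv_cancel_right]
    · rw [Subgroup.index_ker, htop, Subgroup.card_top, hcard]

end MappingTorus

theorem out0_iso_centralizer_quotient (H : Type*) [Group H]
    (hZ : Subgroup.center H = ⊥)
    (hH : ∀ f : H →* Multiplicative ℤ, ¬ Function.Surjective f)
    (φ : MulAut H) :
    ∃ S : Subgroup (Out (MappingTorus H φ)),
      (∀ x : Out (MappingTorus H φ),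
        x ∈ S ↔ ∃ ψ : MulAut (MappingTorus H φ),
          (QuotientGroup.mk ψ : Out (MappingTorus H φ)) = x ∧
          Subgroup.map ψ.toMonoidHom (MappingTorus.ι φ).range = (MappingTorus.ι φ).range ∧
          ∃ g : H, ψ (MappingTorus.t φ) = MappingTorus.ι φ g * MappingTorus.t φ) ∧
      Nonempty (S ≃*
        Subgroup.centralizer ({(QuotientGroup.mk φ : Out H)} : Set (Out H)) ⧸
          (Subgroup.zpowers (QuotientGroup.mk φ : Out H)).subgroupOf
            (Subgroup.centralizer ({(QuotientGroup.mk φ : Out H)} : Set (Out H)))) ∧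
      (S = ⊤ ∨
        (IsConj (QuotientGroup.mk φ : Out H) (QuotientGroup.mk φ : Out H)⁻¹ ∧ S.index = 2)) := by
  have hN := MonoidHom.eq_one_of_forall_not_surjective hH
  exact ⟨(MappingTorus.outDegree φ hN).ker, MappingTorus.mem_ker_outDegree_iff hN,
    ⟨MappingTorus.kerOutDegreeEquiv φ hN hZ⟩, MappingTorus.ker_outDegree_eq_top_or hN⟩
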